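/- arXiv:2310.09183 — 6 statements merged into one kernel-verified Lean document; each statement's English description precedes it below -/
import Mathlib

section
/- Let E be a finite-dimensional real inner product space, f : E → ℝ differentiable, g : E → ℝ twice continuously differentiable, and λ > 0. Suppose p : E → E is differentiable and for every x ∈ E the point p(x) minimizes θ ↦ f(θ) + λ D_g(θ, x) and satisfies the first-order optimality condition ∇f(p(x)) + λ(∇g(p(x)) − ∇g(x)) = 0. Define the Bregman–Moreau envelope e(x) := f(p(x)) + λ D_g(p(x), x). Then e is differentiable and for every x ∈ E, ∇e(x) = λ ∇²g(x)(x − p(x)), where ∇²g(x) denotes the Hessian of g at x viewed as a linear operator on E. -/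
open RealInnerProductSpace

/-- Bregman divergence of a differentiable function `g`. -/
noncomputable def bregman {E : Type*} [NormedAddCommGroup E] [InnerProductSpace ℝ E]
    [CompleteSpace E] (g : E → ℝ) (x y : E) : ℝ :=
  g x - g y - ⟪gradient g y, x - y⟫

/-!
Differentiate `e x = f (p x) + λ D_g(p x, x)` by the chain rule. The terms that involve `Dp(x) v`
collect into `⟪∇f(p x) + λ (∇g(p x) - ∇g x), Dp(x) v⟫`, which vanishes by the first-order
optimality condition, so `p` may be treated as frozen (an envelope theorem). What remains is
`-λ ⟪∇²g(x) v, p x - x⟫`, and the symmetry of the Hessian turns it into `⟪λ ∇²g(x) (x - p x), v⟫`.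
-/

open InnerProductSpace

section Hessian

variable {E : Type*} [NormedAddCommGroup E] [InnerProductSpace ℝ E] [CompleteSpace E]
  {g : E → ℝ} {x : E}

theorem differentiableAt_gradient_iff :
    DifferentiableAt ℝ (gradient g) x ↔ DifferentiableAt ℝ (fderiv ℝ g) x :=
  (toDual ℝ E).symm.comp_differentiableAt_iff

theorem inner_fderiv_gradient_apply (v w : E) :
    ⟪fderiv ℝ (gradient g) x v, w⟫ = fderiv ℝ (fderiv ℝ g) x v w := by
  rw [show gradient g = (toDual ℝ E).symm ∘ fderiv ℝ g from rfl, LinearIsometryEquiv.comp_fderiv]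
  exact toDual_symm_apply

theorem ContDiffAt.isSymmetric_fderiv_gradient (hg : ContDiffAt ℝ 2 g x) :
    (fderiv ℝ (gradient g) x).IsSymmetric := fun v w => by
  change ⟪fderiv ℝ (gradient g) x v, w⟫ = ⟪v, fderiv ℝ (gradient g) x w⟫
  rw [← real_inner_comm v, inner_fderiv_gradient_apply, inner_fderiv_gradient_apply,
    (hg.isSymmSndFDerivAt (by simp)).eq]

theorem ContDiffAt.differentiableAt_gradient (hg : ContDiffAt ℝ 2 g x) :
    DifferentiableAt ℝ (gradient g) x :=
  differentiableAt_gradient_iff.mpr ((hg.fderiv_right (by norm_num)).differentiableAt one_ne_zero)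

end Hessian

section Bregman

variable {E F : Type*} [NormedAddCommGroup E] [InnerProductSpace ℝ E] [CompleteSpace E]
  [NormedAddCommGroup F] [NormedSpace ℝ F] {g : E → ℝ}

theorem HasFDerivAt.bregman {q₁ q₂ : F → E} {Q₁ Q₂ : F →L[ℝ] E} {H : E →L[ℝ] E} {y : F}
    (h₁ : HasFDerivAt q₁ Q₁ y) (h₂ : HasFDerivAt q₂ Q₂ y)
    (hg₁ : DifferentiableAt ℝ g (q₁ y)) (hg₂ : DifferentiableAt ℝ g (q₂ y))
    (hH : HasFDerivAt (gradient g) H (q₂ y)) :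
    HasFDerivAt (fun z => bregman g (q₁ z) (q₂ z))
      (innerSL ℝ (gradient g (q₁ y) - gradient g (q₂ y)) ∘L Q₁
        - innerSL ℝ (q₁ y - q₂ y) ∘L H ∘L Q₂) y := by
  have h := ((hg₁.hasFDerivAt.comp y h₁).sub (hg₂.hasFDerivAt.comp y h₂)).sub
    ((hH.comp y h₂).inner ℝ (h₁.sub h₂))
  refine h.congr_fderiv (ContinuousLinearMap.ext fun v => ?_)
  simp only [Function.comp_apply, Pi.sub_apply, sub_apply,
    ContinuousLinearMap.comp_apply, ContinuousLinearMap.prod_apply, fderivInnerCLM_apply,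
    ContinuousLinearMap.sub_comp, coe_innerSL_apply, map_sub, ← inner_gradient_left,
    inner_sub_right, real_inner_comm]
  ring

theorem hasFDerivAt_add_mul_bregman {f : E → ℝ} {q : E → E} {Q H : E →L[ℝ] E} {x : E}
    (lam : ℝ) (hq : HasFDerivAt q Q x) (hf : DifferentiableAt ℝ f (q x))
    (hgq : DifferentiableAt ℝ g (q x)) (hgx : DifferentiableAt ℝ g x)
    (hH : HasFDerivAt (gradient g) H x) :
    HasFDerivAt (fun y => f (q y) + lam * bregman g (q y) y)
      (innerSL ℝ (gradient f (q x) + lam • (gradient g (q x) - gradient g x)) ∘L Q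
        - lam • innerSL ℝ (q x - x) ∘L H) x := by
  have h := (hf.hasFDerivAt.comp x hq).add
    ((hq.bregman (hasFDerivAt_id x) hgq hgx hH).const_mul lam)
  refine h.congr_fderiv (ContinuousLinearMap.ext fun v => ?_)
  simp only [id_eq, ContinuousLinearMap.comp_id, ContinuousLinearMap.comp_apply,
    ContinuousLinearMap.add_comp, ContinuousLinearMap.sub_comp, ContinuousLinearMap.smul_comp,
    add_apply, sub_apply, smul_apply, coe_innerSL_apply, smul_eq_mul, map_add, map_sub, map_smul,
    ← inner_gradient_left]
  ring

theorem hasGradientAt_add_mul_bregman_of_foc {f : E → ℝ} {q : E → E} {x : E} {lam : ℝ}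
    (hq : DifferentiableAt ℝ q x) (hf : DifferentiableAt ℝ f (q x))
    (hgq : DifferentiableAt ℝ g (q x)) (hg : ContDiffAt ℝ 2 g x)
    (hfoc : gradient f (q x) + lam • (gradient g (q x) - gradient g x) = 0) :
    HasGradientAt (fun y => f (q y) + lam * bregman g (q y) y)
      (lam • fderiv ℝ (gradient g) x (x - q x)) x := by
  have h := hasFDerivAt_add_mul_bregman lam hq.hasFDerivAt hf hgq
    (hg.differentiableAt (by norm_num)) hg.differentiableAt_gradient.hasFDerivAt
  rw [hfoc,
    ContinuousLinearMap.innerSL_apply_comp_of_isSymmetric _ hg.isSymmetric_fderiv_gradient] at h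
  rw [hasGradientAt_iff_hasFDerivAt]
  refine h.congr_fderiv (ContinuousLinearMap.ext fun v => ?_)
  simp only [toDual_apply_apply, map_zero, ContinuousLinearMap.zero_comp, zero_sub, neg_apply,
    smul_apply, sub_apply, innerSL_apply_apply, smul_eq_mul, real_inner_smul_left, map_sub,
    inner_sub_left]
  ring

end Bregman

theorem gradient_bregman_moreau_envelope_general
    {E : Type*} [NormedAddCommGroup E] [InnerProductSpace ℝ E] [FiniteDimensional ℝ E]
    (f g : E → ℝ) (hf : Differentiable ℝ f) (hg : ContDiff ℝ 2 g)
    (lam : ℝ)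
    (p : E → E) (hp : Differentiable ℝ p)
    (hfoc : ∀ x : E, gradient f (p x) + lam • (gradient g (p x) - gradient g x) = 0) :
    Differentiable ℝ (fun x => f (p x) + lam * bregman g (p x) x) ∧
    ∀ x : E, gradient (fun x => f (p x) + lam * bregman g (p x) x) x
      = lam • (fderiv ℝ (gradient g) x) (x - p x) := by
  have key x := hasGradientAt_add_mul_bregman_of_foc (hp x) (hf (p x))
    (hg.differentiable two_ne_zero (p x)) hg.contDiffAt (hfoc x)
  exact ⟨fun x => (key x).differentiableAt, fun x => (key x).gradient⟩

/-- Gradient of the Bregman–Moreau envelope: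
`∇ Denv_{g,λ⁻¹} f (x) = λ ∇²g(x) (x − Dprox_{g,λ⁻¹} f (x))`. -/
theorem gradient_bregman_moreau_envelope
    {E : Type*} [NormedAddCommGroup E] [InnerProductSpace ℝ E] [FiniteDimensional ℝ E]
    (f g : E → ℝ) (hf : Differentiable ℝ f) (hg : ContDiff ℝ 2 g)
    (lam : ℝ) (hlam : 0 < lam)
    (p : E → E) (hp : Differentiable ℝ p)
    (hmin : ∀ x θ : E, f (p x) + lam * bregman g (p x) x ≤ f θ + lam * bregman g θ x)
    (hfoc : ∀ x : E, gradient f (p x) + lam • (gradient g (p x) - gradient g x) = 0) :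
    Differentiable ℝ (fun x => f (p x) + lam * bregman g (p x) x) ∧
    ∀ x : E, gradient (fun x => f (p x) + lam * bregman g (p x) x) x
      = lam • (fderiv ℝ (gradient g) x) (x - p x) :=
  gradient_bregman_moreau_envelope_general f g hf hg lam p hp hfoc
end

section
/- Let E be a finite-dimensional real inner product space and let H : E → ℝ be differentiable and μ-strongly convex (μ > 0) with global minimizer θ*. On a probability space, let θ̃ be an E-valued random vector and suppose that almost surely ∇H(θ̃) = (1/n)·Σ_{j=1}^{n} Z_j + B, where B is a random vector with 𝔼‖B‖² ≤ ε² and Z_1, …, Z_n are random vectors satisfying 𝔼⟪Z_j, Z_k⟫ = 0 for all j ≠ k and 𝔼‖Z_j‖² ≤ γ² for all j. Then 𝔼‖θ̃ − θ*‖² ≤ (2/μ²)·(γ²/n + ε²). -/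
open MeasureTheory RealInnerProductSpace

/-- Local Sampling Proximal Bound (Lemma A.1): if `H` is `μ`-strongly convex with
minimizer `θ*` and the gradient of `H` at the random point `θ̃` equals the average
of `n` mutually orthogonal (in expectation) noise terms with second moments `≤ γ²`
plus a residual with second moment `≤ ε²`, then
`𝔼‖θ̃ − θ*‖² ≤ (2/μ²)(γ²/n + ε²)`. -/
theorem local_sampling_proximal_bound
    {E : Type*} [NormedAddCommGroup E] [InnerProductSpace ℝ E] [FiniteDimensional ℝ E]
    {Ω : Type*} [MeasureSpace Ω] [IsProbabilityMeasure (volume : Measure Ω)]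
    (H : E → ℝ) (hH : Differentiable ℝ H) (μ : ℝ) (hμ : 0 < μ)
    (hsc : ∀ x y : E, μ * ‖x - y‖ ^ 2 ≤ ⟪gradient H x - gradient H y, x - y⟫)
    (θstar : E) (hmin : ∀ x : E, H θstar ≤ H x)
    (n : ℕ) (hn : 1 ≤ n)
    (θtilde B : Ω → E) (Z : Fin n → Ω → E)
    (hdecomp : ∀ᵐ ω, gradient H (θtilde ω) = (n : ℝ)⁻¹ • (∑ j, Z j ω) + B ω)
    (ε γ : ℝ)
    (hBint : Integrable (fun ω => ‖B ω‖ ^ 2))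
    (hB : (∫ ω, ‖B ω‖ ^ 2) ≤ ε ^ 2)
    (hZint : ∀ j : Fin n, Integrable (fun ω => ‖Z j ω‖ ^ 2))
    (hZZint : ∀ j k : Fin n, Integrable (fun ω => ⟪Z j ω, Z k ω⟫))
    (horth : ∀ j k : Fin n, j ≠ k → (∫ ω, ⟪Z j ω, Z k ω⟫) = 0)
    (hZ : ∀ j : Fin n, (∫ ω, ‖Z j ω‖ ^ 2) ≤ γ ^ 2)
    (hθint : Integrable (fun ω => ‖θtilde ω - θstar‖ ^ 2)) :
    (∫ ω, ‖θtilde ω - θstar‖ ^ 2) ≤ (2 / μ ^ 2) * (γ ^ 2 / n + ε ^ 2) := by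
  have hn' : (0:ℝ) < n := by exact_mod_cast hn
  -- gradient at minimizer is zero
  have hgrad0 : gradient H θstar = 0 := by
    have hloc : IsLocalMin H θstar := Filter.Eventually.of_forall hmin
    rw [gradient, hloc.fderiv_eq_zero, map_zero]
  -- pointwise bound
  have hpt : ∀ x : E, ‖x - θstar‖ ^ 2 ≤ μ⁻¹ ^ 2 * ‖gradient H x‖ ^ 2 := by
    intro x
    have h1 := hsc x θstar
    rw [hgrad0, sub_zero] at h1
    have h2 : ⟪gradient H x, x - θstar⟫ ≤ ‖gradient H x‖ * ‖x - θstar‖ :=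
      real_inner_le_norm _ _
    have hd : 0 ≤ ‖x - θstar‖ := norm_nonneg _
    have hg : 0 ≤ ‖gradient H x‖ := norm_nonneg _
    have key : μ ^ 2 * ‖x - θstar‖ ^ 2 ≤ ‖gradient H x‖ ^ 2 := by
      nlinarith [sq_nonneg (μ * ‖x - θstar‖ - ‖gradient H x‖)]
    have : ‖x - θstar‖ ^ 2 ≤ ‖gradient H x‖ ^ 2 / μ ^ 2 := by
      rw [le_div_iff₀ (by positivity)]
      linarith
    calc ‖x - θstar‖ ^ 2 ≤ ‖gradient H x‖ ^ 2 / μ ^ 2 := this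
      _ = μ⁻¹ ^ 2 * ‖gradient H x‖ ^ 2 := by ring
  -- RHS function
  set F : Ω → ℝ := fun ω =>
    2 * μ⁻¹ ^ 2 * (((n:ℝ) ^ 2)⁻¹ * ∑ j, ∑ k, ⟪Z j ω, Z k ω⟫) + 2 * μ⁻¹ ^ 2 * ‖B ω‖ ^ 2
    with hF
  have hFint : Integrable F := by
    apply Integrable.add
    · exact ((integrable_finset_sum _ fun j _ =>
        integrable_finset_sum _ fun k _ => hZZint j k).const_mul _).const_mul _
    · exact hBint.const_mul _
  -- a.e. bound
  have hae : ∀ᵐ ω, ‖θtilde ω - θstar‖ ^ 2 ≤ F ω := by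
    filter_upwards [hdecomp] with ω hω
    have h1 := hpt (θtilde ω)
    rw [hω] at h1
    have h2 : ‖(n : ℝ)⁻¹ • (∑ j, Z j ω) + B ω‖ ^ 2 ≤
        2 * ‖(n : ℝ)⁻¹ • (∑ j, Z j ω)‖ ^ 2 + 2 * ‖B ω‖ ^ 2 := by
      have := norm_add_le ((n : ℝ)⁻¹ • (∑ j, Z j ω)) (B ω)
      nlinarith [norm_nonneg ((n : ℝ)⁻¹ • (∑ j, Z j ω)), norm_nonneg (B ω),
        norm_nonneg ((n : ℝ)⁻¹ • (∑ j, Z j ω) + B ω),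
        sq_nonneg (‖(n : ℝ)⁻¹ • (∑ j, Z j ω)‖ - ‖B ω‖)]
    have h3 : ‖(n : ℝ)⁻¹ • (∑ j, Z j ω)‖ ^ 2 =
        ((n:ℝ) ^ 2)⁻¹ * ∑ j, ∑ k, ⟪Z j ω, Z k ω⟫ := by
      rw [norm_smul]
      have hs : ‖∑ j, Z j ω‖ ^ 2 = ∑ j, ∑ k, ⟪Z j ω, Z k ω⟫ := by
        rw [← real_inner_self_eq_norm_sq, sum_inner]
        exact Finset.sum_congr rfl fun j _ => inner_sum _ _ _
      rw [mul_pow, hs]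
      simp [abs_of_nonneg (le_of_lt (inv_pos.mpr hn')), inv_pow]
    have hmu : (0:ℝ) < μ⁻¹ ^ 2 := by positivity
    calc ‖θtilde ω - θstar‖ ^ 2
        ≤ μ⁻¹ ^ 2 * ‖(n : ℝ)⁻¹ • (∑ j, Z j ω) + B ω‖ ^ 2 := h1
      _ ≤ μ⁻¹ ^ 2 * (2 * ‖(n : ℝ)⁻¹ • (∑ j, Z j ω)‖ ^ 2 + 2 * ‖B ω‖ ^ 2) := by
          exact mul_le_mul_of_nonneg_left h2 (le_of_lt hmu)
      _ = F ω := by rw [hF, h3]; ring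
  have hint_le : (∫ ω, ‖θtilde ω - θstar‖ ^ 2) ≤ ∫ ω, F ω :=
    integral_mono_ae hθint hFint hae
  -- compute ∫ F
  have hsumint : ∀ j : Fin n, (∫ ω, ∑ k, ⟪Z j ω, Z k ω⟫) ≤ γ ^ 2 := by
    intro j
    rw [integral_finset_sum _ fun k _ => hZZint j k]
    have : ∑ k, (∫ ω, ⟪Z j ω, Z k ω⟫) = ∫ ω, ⟪Z j ω, Z j ω⟫ := by
      rw [Finset.sum_eq_single j (fun k _ hk => horth j k (Ne.symm hk)) (by simp)]
    rw [this]
    calc (∫ ω, ⟪Z j ω, Z j ω⟫) = ∫ ω, ‖Z j ω‖ ^ 2 := by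
          congr 1; funext ω; rw [real_inner_self_eq_norm_sq]
      _ ≤ γ ^ 2 := hZ j
  have hγ : (0:ℝ) ≤ γ ^ 2 := le_trans (integral_nonneg fun ω => by positivity) (hZ ⟨0, hn⟩)
  have hFval : (∫ ω, F ω) ≤ 2 * μ⁻¹ ^ 2 * (γ ^ 2 / n + ε ^ 2) := by
    rw [hF]
    rw [integral_add (((integrable_finset_sum _ fun j _ =>
        integrable_finset_sum _ fun k _ => hZZint j k).const_mul _).const_mul _)
        (hBint.const_mul _), integral_const_mul, integral_const_mul, integral_const_mul]
    have hsum : (∫ ω, ∑ j, ∑ k, ⟪Z j ω, Z k ω⟫) ≤ n * γ ^ 2 := by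
      rw [integral_finset_sum _ fun j _ => integrable_finset_sum _ fun k _ => hZZint j k]
      calc (∑ j, ∫ ω, ∑ k, ⟪Z j ω, Z k ω⟫) ≤ ∑ _j : Fin n, γ ^ 2 :=
            Finset.sum_le_sum fun j _ => hsumint j
        _ = n * γ ^ 2 := by simp [mul_comm]
    have h1 : ((n:ℝ) ^ 2)⁻¹ * (∫ ω, ∑ j, ∑ k, ⟪Z j ω, Z k ω⟫) ≤ γ ^ 2 / n := by
      calc ((n:ℝ) ^ 2)⁻¹ * (∫ ω, ∑ j, ∑ k, ⟪Z j ω, Z k ω⟫)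
          ≤ ((n:ℝ) ^ 2)⁻¹ * (n * γ ^ 2) := by
            exact mul_le_mul_of_nonneg_left hsum (by positivity)
        _ = γ ^ 2 / n := by field_simp
    have hmu2 : (0:ℝ) ≤ 2 * μ⁻¹ ^ 2 := by positivity
    nlinarith [hB, mul_le_mul_of_nonneg_left h1 hmu2, mul_le_mul_of_nonneg_left hB hmu2]
  have : (2:ℝ) * μ⁻¹ ^ 2 = 2 / μ ^ 2 := by field_simp
  linarith [hint_le, hFval, this ▸ hFval]
end

section
/- Let E be a finite-dimensional real inner product space, μ : E → E differentiable with ‖Dμ(w)‖_op ≤ K for all w, ℰ : E → ℝ convex and differentiable with ‖∇ℰ(x) − ∇ℰ(y)‖² ≤ 2L_ℰ · D_ℰ(x, y) for all x, y, and F := ℰ ∘ μ. Assume the bounded deviation ratio condition: for all w, w′, ‖Dμ(w) − Dμ(w′)‖_op · max{‖∇ℰ(μ(w))‖, ‖∇ℰ(μ(w′))‖} ≤ σ · max{‖Dμ(w)‖_op, ‖Dμ(w′)‖_op} · ‖∇ℰ(μ(w)) − ∇ℰ(μ(w′))‖. Fix w* ∈ E and suppose D_ℰ(μ(w), μ(w*))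 ≤ τ · D_F(w, w*) for all w. Then for all w ∈ E: ‖∇F(w) − ∇F(w*)‖² ≤ 2 L_F · D_F(w, w*), where L_F := τ (1 + σ)² K² L_ℰ. -/
/-!
By the chain rule `∇F(w) = Dμ(w)† ∇ℰ(μ w)`, so with `A = Dμ(w)`, `B = Dμ(w*)`, `g = ∇ℰ(μ w)`,
`h = ∇ℰ(μ w*)` we have `∇F(w) - ∇F(w*) = A†(g - h) + (A - B)† h`. The bounded deviation ratio
controls the second term by `σ K ‖g - h‖`, giving `‖∇F(w) - ∇F(w*)‖ ≤ (1 + σ) K ‖g - h‖`; smoothness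
of `ℰ` bounds `‖g - h‖²` by `2 Lℰ D_ℰ(μ w, μ w*)`, and the comparison hypothesis turns this into
`2 Lℰ τ D_F(w, w*)`.
-/

open RealInnerProductSpace

theorem ConvexOn.fderiv_apply_sub_le {E : Type*} [NormedAddCommGroup E] [NormedSpace ℝ E]
    {f : E → ℝ} {s : Set E} (hf : ConvexOn ℝ s f) {x y : E} (hx : x ∈ s) (hy : y ∈ s)
    (hfy : DifferentiableAt ℝ f y) : fderiv ℝ f y (x - y) ≤ f x - f y := by
  have hline := hf.comp_affineMap (AffineMap.lineMap y x : ℝ →ᵃ[ℝ] E)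
  have hderiv :
      HasDerivAt (f ∘ (AffineMap.lineMap y x : ℝ →ᵃ[ℝ] E)) (fderiv ℝ f y (x - y)) 0 := by
    simpa using
      hfy.hasFDerivAt.comp_hasDerivAt_of_eq (0 : ℝ) AffineMap.hasDerivAt_lineMap (by simp)
  simpa [slope_def_field] using
    hline.le_slope_of_hasDerivAt (by simpa using hy) (by simpa using hx) one_pos hderiv

section

open ContinuousLinearMap
open scoped InnerProduct

variable {E F : Type*} [NormedAddCommGroup E] [InnerProductSpace ℝ E] [CompleteSpace E]
  [NormedAddCommGroup F] [InnerProductSpace ℝ F] [CompleteSpace F]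

theorem bregman_nonneg {f : E → ℝ} (hf : ConvexOn ℝ Set.univ f) (hfd : Differentiable ℝ f)
    (x y : E) : 0 ≤ bregman f x y := by
  have := hf.fderiv_apply_sub_le (Set.mem_univ x) (Set.mem_univ y) (hfd y)
  rw [bregman, inner_gradient_left]
  linarith

theorem bregman_eq_zero_of_gradient_eq {f : E → ℝ} (hf : Differentiable ℝ f) {y : E}
    (hconst : ∀ u, gradient f u = gradient f y) (x : E) : bregman f x y = 0 := by
  set c := gradient f y
  have hzero : ∀ u, fderiv ℝ (f - ⇑(innerSL ℝ c)) u = 0 := fun u => by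
    rw [((hf u).hasFDerivAt.sub (innerSL ℝ c).hasFDerivAt).fderiv]
    ext v
    rw [sub_apply, ← inner_gradient_left, hconst]
    simp
  have := is_const_of_fderiv_eq_zero (hf.sub (innerSL ℝ c).differentiable) hzero x y
  simp only [Pi.sub_apply, innerSL_apply_apply] at this
  rw [bregman, inner_sub_right]
  linarith

theorem gradient_comp {f : F → ℝ} {g : E → F} {x : E} (hf : DifferentiableAt ℝ f (g x))
    (hg : DifferentiableAt ℝ g x) :
    gradient (f ∘ g) x = ((fderiv ℝ g x)†) (gradient f (g x)) :=
  ext_inner_right ℝ fun v => by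
    rw [inner_gradient_left, adjoint_inner_left, inner_gradient_left, fderiv_comp x hf hg,
      comp_apply]

theorem norm_adjoint_sub_adjoint_le (A B : E →L[ℝ] F) (g h : F) :
    ‖(A†) g - (B†) h‖ ≤ ‖A‖ * ‖g - h‖ + ‖A - B‖ * ‖h‖ := by
  have hsplit : (A†) g - (B†) h = (A†) (g - h) + ((A - B)†) h := by
    simp only [map_sub, sub_apply]
    abel
  calc ‖(A†) g - (B†) h‖ ≤ ‖(A†) (g - h)‖ + ‖((A - B)†) h‖ := hsplit ▸ norm_add_le _ _
    _ ≤ ‖A‖ * ‖g - h‖ + ‖A - B‖ * ‖h‖ := by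
      gcongr <;> exact (le_opNorm _ _).trans_eq (by rw [LinearIsometryEquiv.norm_map])

theorem norm_adjoint_sub_adjoint_sq_le_of_deviation {A B : E →L[ℝ] F} {g h : F} {K σ : ℝ}
    (hA : ‖A‖ ≤ K) (hB : ‖B‖ ≤ K)
    (hdev : ‖A - B‖ * max ‖g‖ ‖h‖ ≤ σ * max ‖A‖ ‖B‖ * ‖g - h‖) :
    ‖(A†) g - (B†) h‖ ^ 2 ≤ (1 + σ) ^ 2 * K ^ 2 * ‖g - h‖ ^ 2 := by
  set a := max ‖A‖ ‖B‖ * ‖g - h‖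
  have ha : 0 ≤ a := by positivity
  have haK : a ≤ K * ‖g - h‖ := mul_le_mul_of_nonneg_right (max_le hA hB) (norm_nonneg _)
  have hle : ‖(A†) g - (B†) h‖ ≤ (1 + σ) * a := by
    have h1 : ‖A‖ * ‖g - h‖ ≤ a := mul_le_mul_of_nonneg_right (le_max_left _ _) (norm_nonneg _)
    have h2 : ‖A - B‖ * ‖h‖ ≤ ‖A - B‖ * max ‖g‖ ‖h‖ := by gcongr; exact le_max_right _ _
    linarith [norm_adjoint_sub_adjoint_le A B g h]
  calc ‖(A†) g - (B†) h‖ ^ 2 ≤ ((1 + σ) * a) ^ 2 := by gcongr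
    _ = (1 + σ) ^ 2 * a ^ 2 := by ring
    _ ≤ (1 + σ) ^ 2 * (K * ‖g - h‖) ^ 2 := by gcongr
    _ = (1 + σ) ^ 2 * K ^ 2 * ‖g - h‖ ^ 2 := by ring

end

/-- Expected smoothness of the personalized local objective `F = ℰ ∘ μ`
(second conclusion of Lemma A.2): with `L_F = τ(1+σ)²K²L_ℰ`,
`‖∇F(w) − ∇F(w*)‖² ≤ 2 L_F D_F(w, w*)`. -/
theorem expected_smooth_personalized_local_objective
    {E : Type*} [NormedAddCommGroup E] [InnerProductSpace ℝ E] [FiniteDimensional ℝ E]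
    (μ : E → E) (hμ : Differentiable ℝ μ)
    (ℰ : E → ℝ) (hℰconv : ConvexOn ℝ Set.univ ℰ) (hℰ : Differentiable ℝ ℰ)
    (K σ Lℰ τ : ℝ)
    (hK : ∀ w : E, ‖fderiv ℝ μ w‖ ≤ K)
    (hsmooth : ∀ x y : E,
      ‖gradient ℰ x - gradient ℰ y‖ ^ 2 ≤ 2 * Lℰ * bregman ℰ x y)
    (hdev : ∀ w w' : E,
      ‖fderiv ℝ μ w - fderiv ℝ μ w'‖
          * max ‖gradient ℰ (μ w)‖ ‖gradient ℰ (μ w')‖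
        ≤ σ * max ‖fderiv ℝ μ w‖ ‖fderiv ℝ μ w'‖
          * ‖gradient ℰ (μ w) - gradient ℰ (μ w')‖)
    (wstar : E)
    (hτ : ∀ w : E, bregman ℰ (μ w) (μ wstar) ≤ τ * bregman (ℰ ∘ μ) w wstar) :
    ∀ w : E,
      ‖gradient (ℰ ∘ μ) w - gradient (ℰ ∘ μ) wstar‖ ^ 2
        ≤ 2 * (τ * (1 + σ) ^ 2 * K ^ 2 * Lℰ) * bregman (ℰ ∘ μ) w wstar := by
  have hgradF : ∀ u u', ‖gradient (ℰ ∘ μ) u - gradient (ℰ ∘ μ) u'‖ ^ 2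
      ≤ (1 + σ) ^ 2 * K ^ 2 * ‖gradient ℰ (μ u) - gradient ℰ (μ u')‖ ^ 2 := fun u u' => by
    rw [gradient_comp (hℰ _) (hμ u), gradient_comp (hℰ _) (hμ u')]
    exact norm_adjoint_sub_adjoint_sq_le_of_deviation (hK u) (hK u') (hdev u u')
  intro w
  rcases lt_or_ge Lℰ 0 with hL | hL
  · -- smoothness with `Lℰ < 0` forces `∇ℰ` to be constant, and then so is `∇F`
    have hgradℰ : ∀ x y, gradient ℰ x = gradient ℰ y := fun x y => by
      have := hsmooth x y
      have := bregman_nonneg hℰconv hℰ x y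
      rw [← sub_eq_zero, ← norm_eq_zero]
      nlinarith [norm_nonneg (gradient ℰ x - gradient ℰ y)]
    have hconst : ∀ u, gradient (ℰ ∘ μ) u = gradient (ℰ ∘ μ) wstar := fun u => by
      simpa [hgradℰ (μ u) (μ wstar), sub_eq_zero] using hgradF u wstar
    rw [hconst w, bregman_eq_zero_of_gradient_eq (hℰ.comp hμ) hconst w]
    simp
  · calc ‖gradient (ℰ ∘ μ) w - gradient (ℰ ∘ μ) wstar‖ ^ 2
        ≤ (1 + σ) ^ 2 * K ^ 2 * ‖gradient ℰ (μ w) - gradient ℰ (μ wstar)‖ ^ 2 :=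
          hgradF w wstar
      _ ≤ (1 + σ) ^ 2 * K ^ 2 * (2 * Lℰ * bregman ℰ (μ w) (μ wstar)) := by
        gcongr; exact hsmooth _ _
      _ ≤ (1 + σ) ^ 2 * K ^ 2 * (2 * Lℰ * (τ * bregman (ℰ ∘ μ) w wstar)) := by
        gcongr; exact hτ w
      _ = 2 * (τ * (1 + σ) ^ 2 * K ^ 2 * Lℰ) * bregman (ℰ ∘ μ) w wstar := by ring
end

section
/- Let E be a real inner product space, let w, w′, v, g ∈ E, let α > 0, let R ≥ 1 be an integer, and let c, δ ≥ 0 with α²c ≤ 1/(2R²). Set w″ := w′ − α·g and suppose ‖g − v‖² ≤ δ + c·‖w′ − w‖². Then ‖w″ − w‖² ≤ 2(1 + 1/R)·‖w′ − w‖² + 2(1 + 2R)·α²·‖v‖² + 2α²·δ. -/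
set_option maxHeartbeats 1000000

/-- Scalar core of the one-step drift recursion. -/
lemma client_drift_scalar (N M A V G α Rr c δ : ℝ)
    (hα : 0 < α) (hRr : 1 ≤ Rr) (hc : 0 ≤ c) (hδ : 0 ≤ δ)
    (hstep : α ^ 2 * c ≤ 1 / (2 * Rr ^ 2))
    (hg : G ^ 2 ≤ δ + c * A ^ 2)
    (hN0 : 0 ≤ N) (hM0 : 0 ≤ M) (hA0 : 0 ≤ A) (hV0 : 0 ≤ V) (hG0 : 0 ≤ G)
    (h1 : N ≤ M + α * G) (h2 : M ≤ A + α * V) :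
    N ^ 2 ≤ 2 * (1 + 1 / Rr) * A ^ 2 + 2 * (1 + 2 * Rr) * α ^ 2 * V ^ 2
      + 2 * α ^ 2 * δ := by
  have hR0 : (0 : ℝ) < Rr := by linarith
  -- Peter–Paul
  have hPP : M ^ 2 ≤ (1 + 1 / (2 * Rr)) * A ^ 2 + (1 + 2 * Rr) * α ^ 2 * V ^ 2 := by
    have h2' : M ^ 2 ≤ (A + α * V) ^ 2 := by
      nlinarith [mul_nonneg hα.le hV0]
    have h2R : (0 : ℝ) < 2 * Rr := by linarith
    have hmul : (2 * Rr) * ((A + α * V) ^ 2)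
        ≤ (2 * Rr) * ((1 + 1 / (2 * Rr)) * A ^ 2 + (1 + 2 * Rr) * α ^ 2 * V ^ 2) := by
      have e : (2 * Rr) * (1 + 1 / (2 * Rr)) = 2 * Rr + 1 := by field_simp
      nlinarith [sq_nonneg (A - 2 * Rr * α * V)]
    have := le_of_mul_le_mul_left hmul h2R
    linarith
  have hN2 : N ^ 2 ≤ 2 * M ^ 2 + 2 * α ^ 2 * G ^ 2 := by
    have hNsq : N ^ 2 ≤ (M + α * G) ^ 2 := by
      nlinarith [mul_nonneg hα.le hG0]
    nlinarith [sq_nonneg (M - α * G)]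
  have hG2 : α ^ 2 * G ^ 2 ≤ α ^ 2 * δ + α ^ 2 * c * A ^ 2 := by
    calc α ^ 2 * G ^ 2 ≤ α ^ 2 * (δ + c * A ^ 2) :=
          mul_le_mul_of_nonneg_left hg (sq_nonneg α)
      _ = α ^ 2 * δ + α ^ 2 * c * A ^ 2 := by ring
  have hfin : 2 * (α ^ 2 * c * A ^ 2) ≤ (1 / Rr) * A ^ 2 := by
    have h1R : α ^ 2 * c ≤ 1 / (2 * Rr) := by
      have : 1 / (2 * Rr ^ 2) ≤ 1 / (2 * Rr) := by
        apply one_div_le_one_div_of_le (by linarith)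
        nlinarith
      linarith
    have h3 := mul_le_mul_of_nonneg_right h1R (sq_nonneg A)
    have e2 : 2 * (1 / (2 * Rr) * A ^ 2) = (1 / Rr) * A ^ 2 := by
      field_simp
    linarith [h3, e2]
  have expand : 2 * (1 + 1 / Rr) * A ^ 2
      = 2 * ((1 + 1 / (2 * Rr)) * A ^ 2) + (1 / Rr) * A ^ 2 := by
    field_simp; ring
  linarith [hPP, hN2, hG2, hfin, expand]

/-- One-step recursion inequality inside the Local–Global Client Drift Bound
(Lemma A.7): with `w″ = w′ − αg` and `‖g − v‖² ≤ δ + c‖w′ − w‖²`, provided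
`α²c ≤ 1/(2R²)`,
`‖w″ − w‖² ≤ 2(1 + 1/R)‖w′ − w‖² + 2(1 + 2R)α²‖v‖² + 2α²δ`. -/
theorem client_drift_one_step
    {E : Type*} [NormedAddCommGroup E] [InnerProductSpace ℝ E]
    (w w' v g : E) (α : ℝ) (hα : 0 < α) (R : ℕ) (hR : 1 ≤ R)
    (c δ : ℝ) (hc : 0 ≤ c) (hδ : 0 ≤ δ)
    (hstep : α ^ 2 * c ≤ 1 / (2 * (R : ℝ) ^ 2))
    (hg : ‖g - v‖ ^ 2 ≤ δ + c * ‖w' - w‖ ^ 2) :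
    ‖(w' - α • g) - w‖ ^ 2
      ≤ 2 * (1 + 1 / (R : ℝ)) * ‖w' - w‖ ^ 2
        + 2 * (1 + 2 * (R : ℝ)) * α ^ 2 * ‖v‖ ^ 2
        + 2 * α ^ 2 * δ := by
  have hRr : (1 : ℝ) ≤ (R : ℝ) := by exact_mod_cast hR
  have key : (w' - α • g) - w = (((w' - w) - α • v)) - α • (g - v) := by
    rw [smul_sub]; abel
  have h1 : ‖(w' - α • g) - w‖ ≤ ‖(w' - w) - α • v‖ + α * ‖g - v‖ := by
    rw [key]
    calc ‖((w' - w) - α • v) - α • (g - v)‖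
        ≤ ‖(w' - w) - α • v‖ + ‖α • (g - v)‖ := norm_sub_le _ _
      _ = ‖(w' - w) - α • v‖ + α * ‖g - v‖ := by
          rw [norm_smul, Real.norm_eq_abs, abs_of_pos hα]
  have h2 : ‖(w' - w) - α • v‖ ≤ ‖w' - w‖ + α * ‖v‖ := by
    calc ‖(w' - w) - α • v‖ ≤ ‖w' - w‖ + ‖α • v‖ := norm_sub_le _ _
      _ = ‖w' - w‖ + α * ‖v‖ := by
          rw [norm_smul, Real.norm_eq_abs, abs_of_pos hα]
  exact client_drift_scalar _ _ _ _ _ α (R : ℝ) c δ hα hRr hc hδ hstep hg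
    (norm_nonneg _) (norm_nonneg _) (norm_nonneg _) (norm_nonneg _)
    (norm_nonneg _) h1 h2
end

section
/- Let μ > 0, let α be a real with 0 < α < 2/μ, let T ≥ 1 be an integer with α·μ·T ≥ 2, and let c ≥ 0. Let Δ_0, Δ_1, …, Δ_T and D_0, …, D_{T−1} be nonnegative reals satisfying Δ_{t+1} ≤ (1 − αμ/2)·Δ_t − α·D_t + c for all 0 ≤ t ≤ T−1. Define the weights ξ_t := (1 − αμ/2)^{−(t+1)} and X := Σ_{t=0}^{T−1} ξ_t. Then the weighted average satisfies (1/X)·Σ_{t=0}^{T−1} ξ_t·D_t ≤ μ·e^{−αμT/2}·Δ_0 + c/α. -/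
/-! Multiplying the recursion at step `t` by `ξ_t = r^{-(t+1)}`, where `r = 1 - αμ/2`, makes it
telescope to `α Σ ξ_t D_t ≤ Δ_0 + c X`. The weights form a geometric sum,
`(αμ/2) X = r^{-T} - 1`, and `r^T ≤ e^{-αμT/2} ≤ e^{-1} < 1/2` gives `r^{-T} - 1 ≥ r^{-T}/2`,
hence `1 / (αX) ≤ μ r^T ≤ μ e^{-αμT/2}`. -/

open Finset

theorem zpow_neg_natCast_sub_one {K : Type*} [DivisionRing K] (r : K) (t : ℕ) :
    r ^ (-(t : ℤ) - 1) = (r ^ (t + 1))⁻¹ := by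
  rw [← zpow_natCast, ← zpow_neg]
  push_cast
  ring_nf

theorem one_sub_mul_sum_inv_pow_succ {K : Type*} [Field K] {r : K} (hr : r ≠ 0) (n : ℕ) :
    (1 - r) * ∑ t ∈ range n, (r ^ (t + 1))⁻¹ = (r ^ n)⁻¹ - 1 := by
  have hsum : ∑ t ∈ range n, (r ^ (t + 1))⁻¹ = r⁻¹ * ∑ t ∈ range n, r⁻¹ ^ t := by
    rw [mul_sum]
    exact sum_congr rfl fun t _ => by rw [pow_succ', mul_inv, inv_pow]
  rw [hsum, ← mul_assoc, show (1 - r) * r⁻¹ = r⁻¹ - 1 by field_simp, mul_geom_sum, inv_pow]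

section Contraction

variable {𝕜 : Type*} [Field 𝕜] [LinearOrder 𝕜] [IsStrictOrderedRing 𝕜] {r : 𝕜}

theorem inv_pow_mul_le_add_sum_of_le_mul_add (hr : 0 < r) {u e : ℕ → 𝕜} {n : ℕ}
    (h : ∀ t < n, u (t + 1) ≤ r * u t + e t) :
    (r ^ n)⁻¹ * u n ≤ u 0 + ∑ t ∈ range n, (r ^ (t + 1))⁻¹ * e t := by
  induction n with
  | zero => simp
  | succ n ih =>
    have hstep : (r ^ (n + 1))⁻¹ * u (n + 1) ≤ (r ^ n)⁻¹ * u n + (r ^ (n + 1))⁻¹ * e n :=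
      calc (r ^ (n + 1))⁻¹ * u (n + 1) ≤ (r ^ (n + 1))⁻¹ * (r * u n + e n) := by
            gcongr; exact h n n.lt_succ_self
        _ = (r ^ n)⁻¹ * u n + (r ^ (n + 1))⁻¹ * e n := by
            field_simp; ring
    rw [sum_range_succ]
    linarith [ih fun t ht => h t (ht.trans n.lt_succ_self)]

theorem inv_pow_le_two_mul_one_sub_mul_sum (hr : 0 < r) {n : ℕ} (hrn : r ^ n ≤ 1 / 2) :
    (r ^ n)⁻¹ ≤ 2 * (1 - r) * ∑ t ∈ range n, (r ^ (t + 1))⁻¹ := by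
  have h2 : 2 ≤ (r ^ n)⁻¹ := by
    rw [le_inv_comm₀ two_pos (by positivity)]; simpa using hrn
  rw [mul_assoc, one_sub_mul_sum_inv_pow_succ hr.ne']
  linarith

end Contraction

theorem weighted_average_convergence_bound_general
    (μ α : ℝ) (hμ : 0 < μ) (hα : 0 < α) (hα2 : α < 2 / μ)
    (T : ℕ) (hT : 1 ≤ T) (hstep : 2 ≤ α * μ * T)
    (c : ℝ)
    (Δ : ℕ → ℝ) (hΔ : ∀ t, t ≤ T → 0 ≤ Δ t)
    (D : ℕ → ℝ)
    (hrec : ∀ t, t ≤ T - 1 → Δ (t + 1) ≤ (1 - α * μ / 2) * Δ t - α * D t + c) :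
    (1 / ∑ t ∈ range T, (1 - α * μ / 2) ^ (-(t : ℤ) - 1)) *
        ∑ t ∈ range T, (1 - α * μ / 2) ^ (-(t : ℤ) - 1) * D t
      ≤ μ * Real.exp (-(α * μ * T) / 2) * Δ 0 + c / α := by
  have hαμ : α * μ < 2 := (lt_div_iff₀ hμ).mp hα2
  set r := 1 - α * μ / 2 with hr
  set E := Real.exp (-(α * μ * T) / 2)
  simp only [zpow_neg_natCast_sub_one]
  set X := ∑ t ∈ range T, (r ^ (t + 1))⁻¹
  set S := ∑ t ∈ range T, (r ^ (t + 1))⁻¹ * D t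
  have hr0 : 0 < r := by linarith
  have hX : 0 < X := sum_pos (fun t _ => by positivity) (nonempty_range_iff.mpr (by omega))
  have htelescope : α * S ≤ Δ 0 + c * X := by
    have h := inv_pow_mul_le_add_sum_of_le_mul_add hr0 (u := Δ) (n := T)
      (e := fun t => c - α * D t) fun t ht => by linarith [hrec t (by omega)]
    simp only [mul_sub, sum_sub_distrib, ← sum_mul, mul_left_comm _ α, ← mul_sum] at h
    have : 0 ≤ (r ^ T)⁻¹ * Δ T := mul_nonneg (by positivity) (hΔ T le_rfl)
    rw [mul_comm c]
    linarith
  have hrT : r ^ T ≤ E := by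
    have h := Real.one_sub_div_pow_le_exp_neg (n := T) (t := α * μ * T / 2) (by nlinarith)
    rwa [show α * μ * T / 2 / T = α * μ / 2 by field_simp, ← neg_div] at h
  have hE : E ≤ 1 / 2 :=
    (Real.exp_le_exp.mpr (by linarith)).trans Real.exp_neg_one_lt_half.le
  have hαμX : (r ^ T)⁻¹ ≤ α * μ * X := by
    have h := inv_pow_le_two_mul_one_sub_mul_sum hr0 (hrT.trans hE)
    rwa [show 2 * (1 - r) = α * μ by ring] at h
  have hΔ0 : 0 ≤ Δ 0 := hΔ 0 (Nat.zero_le T)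
  have hcontract : 1 ≤ μ * E * (α * X) :=
    calc 1 = r ^ T * (r ^ T)⁻¹ := (mul_inv_cancel₀ (by positivity)).symm
      _ ≤ E * (α * μ * X) := by gcongr
      _ = μ * E * (α * X) := by ring
  calc 1 / X * S = α * S / (α * X) := by field_simp
    _ ≤ (Δ 0 + c * X) / (α * X) := by gcongr
    _ = Δ 0 / (α * X) + c / α := by field_simp
    _ ≤ μ * E * Δ 0 + c / α := by
      gcongr
      rw [div_le_iff₀ (by positivity)]
      nlinarith

/-- Final convergence-rate step of Theorem 1 (pFedBreD's global bound): the weighted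
average of the suboptimality gaps satisfies
`(1/X)Σ ξ_t D_t ≤ μ e^{−αμT/2} Δ₀ + c/α`, where `ξ_t = (1 − αμ/2)^{−(t+1)}`. -/
theorem weighted_average_convergence_bound
    (μ α : ℝ) (hμ : 0 < μ) (hα : 0 < α) (hα2 : α < 2 / μ)
    (T : ℕ) (hT : 1 ≤ T) (hstep : 2 ≤ α * μ * T)
    (c : ℝ) (hc : 0 ≤ c)
    (Δ : ℕ → ℝ) (hΔ : ∀ t, t ≤ T → 0 ≤ Δ t)
    (D : ℕ → ℝ) (hD : ∀ t, t ≤ T - 1 → 0 ≤ D t)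
    (hrec : ∀ t, t ≤ T - 1 → Δ (t + 1) ≤ (1 - α * μ / 2) * Δ t - α * D t + c) :
    (1 / ∑ t ∈ range T, (1 - α * μ / 2) ^ (-(t : ℤ) - 1)) *
        ∑ t ∈ range T, (1 - α * μ / 2) ^ (-(t : ℤ) - 1) * D t
      ≤ μ * Real.exp (-(α * μ * T) / 2) * Δ 0 + c / α :=
  weighted_average_convergence_bound_general μ α hμ hα hα2 T hT hstep c Δ hΔ D hrec
end

section
/- Let E be a finite-dimensional real inner product space, let F_i, F : E → ℝ be differentiable, let λ, μ_F, μ̂ > 0 and L_F, ε, ε₁, γ, σ, η, G ≥ 0, let n ≥ 1 be an integer, and let θ̃, θ*, μ, w, w* ∈ E. Assume: (i) ‖θ̃ − θ*‖² ≤ (2/μ_F²)·(γ²/n + ε²); (ii) λ·(μ − θ*) = ṽ for some ṽ ∈ E with ‖ṽ − ∇F_i(w)‖ ≤ ε₁; (iii) ‖∇F_i(w) − ∇F_i(w*)‖² ≤ 2L_F·(F(w) − F(w*)) and ‖∇F_i(w*)‖² ≤ σ²; (iv) ‖μ − w‖ ≤ η·G; (v) ‖w − w*‖² ≤ (2/μ̂)·(F(w)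 − F(w*)). Then ‖θ̃ − w*‖² ≤ 4·[(2/μ_F²)(γ²/n + ε²) + (2/λ²)ε₁² + (4/λ²)σ² + η²G²] + (32L_F/λ² + 8/μ̂)·(F(w) − F(w*)). -/
/-!
Split `θ̃ - w*` along the path `θ̃ → θ* → μ → w → w*`. The four legs are controlled by (i),
by the proximal identity `θ* - μ = -λ⁻¹ ṽ` together with (ii) and (iii), by the meta-step (iv),
and by strong convexity (v); the elementary bound `‖x + y‖² ≤ 2 (‖x‖² + ‖y‖²)`, applied twice,
turns the four-term triangle inequality into a sum of squares.
-/

open RealInnerProductSpace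

section SquaredNorm

variable {E : Type*} [SeminormedAddCommGroup E]

theorem norm_add_sq_le_two_mul (x y : E) : ‖x + y‖ ^ 2 ≤ 2 * (‖x‖ ^ 2 + ‖y‖ ^ 2) :=
  (pow_le_pow_left₀ (norm_nonneg _) (norm_add_le x y) 2).trans add_sq_le

theorem norm_add_add_add_sq_le_four_mul (a b c d : E) :
    ‖a + b + c + d‖ ^ 2 ≤ 4 * (‖a‖ ^ 2 + ‖b‖ ^ 2 + ‖c‖ ^ 2 + ‖d‖ ^ 2) := by
  have hab := norm_add_sq_le_two_mul a b
  have hcd := norm_add_sq_le_two_mul c d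
  calc ‖a + b + c + d‖ ^ 2 = ‖(a + b) + (c + d)‖ ^ 2 := by rw [add_assoc (a + b)]
    _ ≤ 2 * (‖a + b‖ ^ 2 + ‖c + d‖ ^ 2) := norm_add_sq_le_two_mul _ _
    _ ≤ 4 * (‖a‖ ^ 2 + ‖b‖ ^ 2 + ‖c‖ ^ 2 + ‖d‖ ^ 2) := by linarith

theorem norm_sub_sq_le_four_mul (a b c d e : E) :
    ‖a - e‖ ^ 2 ≤ 4 * (‖a - b‖ ^ 2 + ‖b - c‖ ^ 2 + ‖c - d‖ ^ 2 + ‖d - e‖ ^ 2) := by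
  simpa using norm_add_add_add_sq_le_four_mul (a - b) (b - c) (c - d) (d - e)

theorem norm_sq_le_of_norm_sub_le {v g g' : E} {ε : ℝ} (hv : ‖v - g‖ ≤ ε) :
    ‖v‖ ^ 2 ≤ 2 * ε ^ 2 + 4 * ‖g - g'‖ ^ 2 + 4 * ‖g'‖ ^ 2 := by
  have hvε : ‖v - g‖ ^ 2 ≤ ε ^ 2 := pow_le_pow_left₀ (norm_nonneg _) hv 2
  have hg := norm_add_sq_le_two_mul (g - g') g'
  calc ‖v‖ ^ 2 = ‖(v - g) + ((g - g') + g')‖ ^ 2 := by simp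
    _ ≤ 2 * (‖v - g‖ ^ 2 + ‖(g - g') + g'‖ ^ 2) := norm_add_sq_le_two_mul _ _
    _ ≤ 2 * ε ^ 2 + 4 * ‖g - g'‖ ^ 2 + 4 * ‖g'‖ ^ 2 := by linarith

end SquaredNorm

theorem norm_sub_sq_eq_of_smul_sub_eq {E : Type*} [SeminormedAddCommGroup E] [NormedSpace ℝ E]
    {μ θ v : E} {lam : ℝ} (hlam : lam ≠ 0) (h : lam • (μ - θ) = v) :
    ‖θ - μ‖ ^ 2 = ‖v‖ ^ 2 / lam ^ 2 := by
  rw [← h, norm_smul, Real.norm_eq_abs, mul_pow, sq_abs, norm_sub_rev,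
    mul_div_cancel_left₀ _ (pow_ne_zero 2 hlam)]

theorem personalization_bound_general
    {E : Type*} [NormedAddCommGroup E] [InnerProductSpace ℝ E] [FiniteDimensional ℝ E]
    (Fi F : E → ℝ)
    (lam μF μhat : ℝ) (hlam : 0 < lam)
    (LF ε ε₁ γ σ η G : ℝ)
    (n : ℕ)
    (θtilde θstar μ w wstar : E)
    (h1 : ‖θtilde - θstar‖ ^ 2 ≤ (2 / μF ^ 2) * (γ ^ 2 / n + ε ^ 2))
    (h2 : ∃ vtilde : E, lam • (μ - θstar) = vtilde ∧
      ‖vtilde - gradient Fi w‖ ≤ ε₁)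
    (h3a : ‖gradient Fi w - gradient Fi wstar‖ ^ 2 ≤ 2 * LF * (F w - F wstar))
    (h3b : ‖gradient Fi wstar‖ ^ 2 ≤ σ ^ 2)
    (h4 : ‖μ - w‖ ≤ η * G)
    (h5 : ‖w - wstar‖ ^ 2 ≤ (2 / μhat) * (F w - F wstar)) :
    ‖θtilde - wstar‖ ^ 2
      ≤ 4 * ((2 / μF ^ 2) * (γ ^ 2 / n + ε ^ 2) + (2 / lam ^ 2) * ε₁ ^ 2
            + (4 / lam ^ 2) * σ ^ 2 + η ^ 2 * G ^ 2)
        + (32 * LF / lam ^ 2 + 8 / μhat) * (F w - F wstar) := by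
  obtain ⟨v, hv, hvg⟩ := h2
  have hv2 : ‖v‖ ^ 2 ≤ 2 * ε₁ ^ 2 + 4 * (2 * LF * (F w - F wstar)) + 4 * σ ^ 2 := by
    linarith [norm_sq_le_of_norm_sub_le (g' := gradient Fi wstar) hvg]
  have hθμ : ‖θstar - μ‖ ^ 2 ≤ (2 * ε₁ ^ 2 + 4 * (2 * LF * (F w - F wstar)) + 4 * σ ^ 2)
      / lam ^ 2 := by
    rw [norm_sub_sq_eq_of_smul_sub_eq hlam.ne' hv]
    gcongr
  have hμw : ‖μ - w‖ ^ 2 ≤ (η * G) ^ 2 := pow_le_pow_left₀ (norm_nonneg _) h4 2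
  calc ‖θtilde - wstar‖ ^ 2
      ≤ 4 * (‖θtilde - θstar‖ ^ 2 + ‖θstar - μ‖ ^ 2 + ‖μ - w‖ ^ 2 + ‖w - wstar‖ ^ 2) :=
        norm_sub_sq_le_four_mul _ _ _ _ _
    _ ≤ 4 * ((2 / μF ^ 2) * (γ ^ 2 / n + ε ^ 2)
          + (2 * ε₁ ^ 2 + 4 * (2 * LF * (F w - F wstar)) + 4 * σ ^ 2) / lam ^ 2
          + (η * G) ^ 2 + (2 / μhat) * (F w - F wstar)) := by
        gcongr
    _ = _ := by ring

/-- Deterministic per-client form of Theorem 2 (pFedBreD's first-order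
personalization bound) under the spherical Gaussian prior. -/
theorem personalization_bound
    {E : Type*} [NormedAddCommGroup E] [InnerProductSpace ℝ E] [FiniteDimensional ℝ E]
    (Fi F : E → ℝ) (hFi : Differentiable ℝ Fi) (hF : Differentiable ℝ F)
    (lam μF μhat : ℝ) (hlam : 0 < lam) (hμF : 0 < μF) (hμhat : 0 < μhat)
    (LF ε ε₁ γ σ η G : ℝ) (hLF : 0 ≤ LF) (hε : 0 ≤ ε) (hε₁ : 0 ≤ ε₁)
    (hγ : 0 ≤ γ) (hσ : 0 ≤ σ) (hη : 0 ≤ η) (hG : 0 ≤ G)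
    (n : ℕ) (hn : 1 ≤ n)
    (θtilde θstar μ w wstar : E)
    (h1 : ‖θtilde - θstar‖ ^ 2 ≤ (2 / μF ^ 2) * (γ ^ 2 / n + ε ^ 2))
    (h2 : ∃ vtilde : E, lam • (μ - θstar) = vtilde ∧
      ‖vtilde - gradient Fi w‖ ≤ ε₁)
    (h3a : ‖gradient Fi w - gradient Fi wstar‖ ^ 2 ≤ 2 * LF * (F w - F wstar))
    (h3b : ‖gradient Fi wstar‖ ^ 2 ≤ σ ^ 2)
    (h4 : ‖μ - w‖ ≤ η * G)
    (h5 : ‖w - wstar‖ ^ 2 ≤ (2 / μhat) * (F w - F wstar)) :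
    ‖θtilde - wstar‖ ^ 2
      ≤ 4 * ((2 / μF ^ 2) * (γ ^ 2 / n + ε ^ 2) + (2 / lam ^ 2) * ε₁ ^ 2
            + (4 / lam ^ 2) * σ ^ 2 + η ^ 2 * G ^ 2)
        + (32 * LF / lam ^ 2 + 8 / μhat) * (F w - F wstar) :=
  personalization_bound_general Fi F lam μF μhat hlam LF ε ε₁ γ σ η G n θtilde θstar μ w wstar h1 h2
    h3a h3b h4 h5
end
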